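/- No embedding of ℤ² into the topological full group of a full shift Σ^ℤ is move-A-ithful, for any nontrivial finite abelian group A. That is, if G ≅ ℤ² is a subgroup of ⟦Σ^ℤ⟧ with cocycles c_g, then there exists β : G → A with finite nonempty support such that for all x ∈ Σ^ℤ and all γ : ℤ → End(A), Σ_{g ∈ G} γ(c_g(x))(β(g)) = 0. -/

import Mathlib

/-- The shift map `σ^n`: `(shiftZ n x) i = x (i + n)`; `shiftZ 1` is the left shift `σ`. -/
def shiftZ {A : Type*} (n : ℤ) (x : ℤ → A) : ℤ → A := fun i => x (i + n)

/-- An action of a group `G` by elements of the topological full group of the full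
shift `A^ℤ`, given together with the continuous cocycles `c g`. -/
structure FullShiftTFGAction (A : Type*) [TopologicalSpace A] (G : Type*) [Group G] where
  f : G → ((ℤ → A) ≃ₜ (ℤ → A))
  c : G → (ℤ → A) → ℤ
  cont : ∀ g, Continuous (c g)
  spec : ∀ g x, f g x = shiftZ (c g x) x
  map_mul : ∀ g h x, f (g * h) x = f g (f h x)

/-!
Aperiodic points are dense in `A^ℤ`, so a continuous cocycle is determined by its values on
them. This gives the cocycle identity and, for commuting `k` and `w`, that `c_k x = 0` implies
`c_k (w • x) = 0`. Cocycles grow at most linearly on `ℤ²` while the box `[0, n]²` has `(n + 1)²`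
elements, so by pigeonhole two elements `p ≠ q` of the box satisfy `c_p x = c_q x`, whence
`c_{p q⁻¹} x = 0`: a finite set `V ∌ 1` contains, for every `x`, some `v` with `c_v x = 0`.
Take `β = φ ∘ P` for `P = ∏_{v ∈ V} (1 - v)` in the domain `𝔽_p[ℤ²]` and `φ : 𝔽_p ↪ M`. When
`c_v x = 0`, the weight `g ↦ γ (c_g x)` is `v`-periodic while `P` is divisible by `1 - v`, so the
sum telescopes to zero.
-/

section

open Filter Function Multiplicative Finset Pointwise

variable {A : Type*}

lemma shiftZ_zero (x : ℤ → A) : shiftZ 0 x = x := funext fun i => congrArg x (add_zero i)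

lemma shiftZ_shiftZ (m n : ℤ) (x : ℤ → A) : shiftZ m (shiftZ n x) = shiftZ (m + n) x :=
  funext fun i => congrArg x (add_assoc i m n)

def IsAperiodic (x : ℤ → A) : Prop := ∀ p : ℤ, Periodic x p → p = 0

lemma periodic_sub_of_shiftZ_eq {x : ℤ → A} {s t : ℤ} (h : shiftZ s x = shiftZ t x) :
    Periodic x (s - t) := fun i => by
  convert congrFun h (i - t) using 1 <;> simp only [shiftZ] <;> congr 1 <;> ring

lemma IsAperiodic.shiftZ_injective {x : ℤ → A} (hx : IsAperiodic x) :
    Injective fun n => shiftZ n x := fun _ _ h => sub_eq_zero.1 (hx _ (periodic_sub_of_shiftZ_eq h))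

lemma IsAperiodic.shiftZ {x : ℤ → A} (hx : IsAperiodic x) (n : ℤ) : IsAperiodic (shiftZ n x) :=
  fun p hp => hx p fun i => by
    convert hp (i - n) using 1 <;> simp only [_root_.shiftZ] <;> congr 1 <;> ring

lemma isAperiodic_of_eventually_eq {x : ℤ → A} {a b : A} (hab : a ≠ b)
    (ha : ∀ᶠ i in atBot, x i = a) (hb : ∀ᶠ i in atTop, x i = b) : IsAperiodic x := by
  intro p hp
  by_contra hp0
  obtain ⟨m, hm⟩ := eventually_atBot.1 ha
  obtain ⟨n, hn⟩ := eventually_atTop.1 hb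
  have hpp : 1 ≤ p * p := by rcases lt_or_gt_of_ne hp0 with h | h <;> nlinarith
  have hfar : n ≤ m + |n - m| * p * p := by nlinarith [le_abs_self (n - m), abs_nonneg (n - m)]
  have hper := hp.int_mul (|n - m| * p) m
  rw [Int.cast_id] at hper
  exact hab ((hm m le_rfl).symm.trans (hper.symm.trans (hn _ hfar)))

theorem dense_setOf_isAperiodic [TopologicalSpace A] [Nontrivial A] :
    Dense {x : ℤ → A | IsAperiodic x} := by
  classical
  obtain ⟨a, b, hab⟩ := exists_pair_ne A
  refine dense_iff_inter_open.2 fun U hU ⟨x, hx⟩ => ?_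
  obtain ⟨I, u, hu, hIU⟩ := isOpen_pi_iff.1 hU x hx
  let y : ℤ → A := fun i => if i ∈ I then x i else if i < 0 then a else b
  have hI : ∀ᶠ i in cofinite, i ∉ I := I.eventually_cofinite_notMem
  rw [Int.cofinite_eq] at hI
  refine ⟨y, hIU fun i hi => ?_, isAperiodic_of_eventually_eq hab ?_ ?_⟩
  · simpa [y, show i ∈ I from hi] using (hu i hi).2
  · filter_upwards [hI.filter_mono le_sup_left, eventually_lt_atBot 0] with i hi hi0
    simp [y, hi, hi0]
  · filter_upwards [hI.filter_mono le_sup_right, eventually_ge_atTop 0] with i hi hi0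
    simp [y, hi, hi0.not_gt]

namespace FullShiftTFGAction

variable [TopologicalSpace A] {G : Type*}

section Group

variable [Group G] (T : FullShiftTFGAction A G)

lemma f_eq_self_of_c_eq_zero {g : G} {x : ℤ → A} (h : T.c g x = 0) : T.f g x = x := by
  rw [T.spec, h, shiftZ_zero]

lemma f_one_apply (x : ℤ → A) : T.f 1 x = x :=
  (T.f 1).injective (by rw [← T.map_mul, one_mul])

lemma f_inv_apply_f (g : G) (x : ℤ → A) : T.f g⁻¹ (T.f g x) = x := by
  rw [← T.map_mul, inv_mul_cancel, f_one_apply]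

lemma c_mul [Nontrivial A] (g h : G) (x : ℤ → A) :
    T.c (g * h) x = T.c g (T.f h x) + T.c h x := by
  refine congrFun (Continuous.ext_on dense_setOf_isAperiodic (T.cont _)
    (((T.cont g).comp (T.f h).continuous).add (T.cont h)) fun z hz => ?_) x
  refine hz.shiftZ_injective (?_ : shiftZ _ z = shiftZ (T.c g (T.f h z) + T.c h z) z)
  rw [← T.spec, T.map_mul, T.spec g, T.spec h, shiftZ_shiftZ]

lemma c_one [Nontrivial A] (x : ℤ → A) : T.c 1 x = 0 := by
  obtain ⟨y, rfl⟩ := (T.f 1).surjective x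
  simpa using T.c_mul 1 1 y

lemma abs_c_mul_le [Nontrivial A] {g h : G} {K L : ℤ} (hg : ∀ x, |T.c g x| ≤ K)
    (hh : ∀ x, |T.c h x| ≤ L) (x : ℤ → A) : |T.c (g * h) x| ≤ K + L := by
  rw [T.c_mul]
  exact (abs_add_le _ _).trans (add_le_add (hg _) (hh x))

lemma abs_c_pow_le [Nontrivial A] {g : G} {K : ℤ} (hg : ∀ x, |T.c g x| ≤ K) (n : ℕ)
    (x : ℤ → A) : |T.c (g ^ n) x| ≤ n * K := by
  induction n generalizing x with
  | zero => simp [c_one]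
  | succ n ih =>
    rw [pow_succ, Nat.cast_succ, add_one_mul]
    exact T.abs_c_mul_le ih hg x

lemma exists_abs_c_le [CompactSpace A] (g : G) : ∃ K : ℕ, ∀ x, |T.c g x| ≤ K := by
  obtain ⟨K, hK⟩ :=
    ((isCompact_range (continuous_abs.comp (T.cont g))).finite_of_discrete).bddAbove
  exact ⟨K.toNat, fun x => (hK ⟨x, rfl⟩).trans (Int.self_le_toNat K)⟩

end Group

section CommGroup

variable [CommGroup G] (T : FullShiftTFGAction A G)

lemma c_f_eq_zero_of_isAperiodic {k : G} {z : ℤ → A} (hz : IsAperiodic z) (h : T.c k z = 0)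
    (w : G) : T.c k (T.f w z) = 0 := by
  have hfix : T.f k (T.f w z) = T.f w z := by
    rw [← T.map_mul, mul_comm, T.map_mul, T.f_eq_self_of_c_eq_zero h]
  refine (hz.shiftZ (T.c w z)).shiftZ_injective ?_
  simpa [← T.spec, shiftZ_zero] using hfix

lemma c_f_eq_zero [Nontrivial A] {k : G} {x : ℤ → A} (h : T.c k x = 0) (w : G) :
    T.c k (T.f w x) = 0 := by
  by_contra hne
  let U := T.c k ⁻¹' {0} ∩ (fun y => T.c k (T.f w y)) ⁻¹' {0}ᶜ
  have hU : IsOpen U := ((T.cont k).isOpen_preimage _ (isOpen_discrete _)).inter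
    (((T.cont k).comp (T.f w).continuous).isOpen_preimage _ (isOpen_discrete _))
  obtain ⟨z, ⟨hz0, hzw⟩, hz⟩ := dense_setOf_isAperiodic.inter_open_nonempty U hU ⟨x, h, hne⟩
  exact hzw (T.c_f_eq_zero_of_isAperiodic hz hz0 w)

theorem exists_mem_div_ne_one_c_eq_zero [Nontrivial A] [DecidableEq G] (D : Finset G) (L : ℕ)
    (hD : 2 * L + 1 < #D) (hL : ∀ g ∈ D, ∀ x, |T.c g x| ≤ L) (x : ℤ → A) :
    ∃ g ∈ D / D, g ≠ 1 ∧ T.c g x = 0 := by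
  have hcard : #(Icc (-L : ℤ) L) < #D := by rw [Int.card_Icc]; omega
  obtain ⟨p, hp, q, hq, hpq, hc⟩ := exists_ne_map_eq_of_card_lt_of_maps_to hcard
    fun g hg => mem_Icc.2 (abs_le.1 (hL g hg x))
  refine ⟨p / q, div_mem_div hp hq, div_ne_one.2 hpq, ?_⟩
  have hcq : T.c (p / q) (T.f q x) = 0 := by
    simpa [hc] using T.c_mul (p / q) q x
  simpa [f_inv_apply_f] using T.c_f_eq_zero hcq q⁻¹

end CommGroup

end FullShiftTFGAction

lemma exists_prime_zmod_addMonoidHom_injective (M : Type*) [AddCommGroup M] [Finite M]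
    [Nontrivial M] : ∃ (p : ℕ) (_ : Fact p.Prime) (φ : ZMod p →+ M), Injective φ := by
  obtain ⟨p, hp, hdvd⟩ := Nat.exists_prime_and_dvd (Finite.one_lt_card (α := M)).ne'
  have := Fact.mk hp
  obtain ⟨m, hm⟩ := exists_prime_addOrderOf_dvd_card' p hdvd
  let φ : ZMod p →+ M := ZMod.lift p ⟨zmultiplesHom M m, by simp [← hm, addOrderOf_nsmul_eq_zero]⟩
  refine ⟨p, this, φ, (injective_iff_map_eq_zero φ).2 fun a ha => ?_⟩
  obtain ⟨k, rfl⟩ := ZMod.intCast_surjective a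
  rw [ZMod.intCast_zmod_eq_zero_iff_dvd, ← hm]
  exact addOrderOf_dvd_iff_zsmul_eq_zero.2 (by simpa [φ] using ha)

lemma finsum_apply_sub_apply_mul_inv_eq_zero {G M N : Type*} [Group G] [AddCommGroup M]
    [AddCommGroup N] {B : G → M} (hB : (support B).Finite) {v : G} (w : G → M →+ N)
    (hw : ∀ g, w (g * v) = w g) : ∑ᶠ g, w g (B g - B (g * v⁻¹)) = 0 := by
  have h₁ : (support fun g => w g (B g)).Finite :=
    hB.subset (support_subset_iff'.2 fun g hg => by rw [notMem_support.1 hg, map_zero])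
  have h₂ : (support fun g => w g (B (g * v⁻¹))).Finite :=
    (hB.preimage (mul_left_injective v⁻¹).injOn).subset
      (support_subset_iff'.2 fun g hg => by rw [notMem_support.1 hg, map_zero])
  simp_rw [map_sub]
  rw [finsum_sub_distrib h₁ h₂, sub_eq_zero,
    ← finsum_comp_equiv (Equiv.mulRight v) (f := fun g => w g (B (g * v⁻¹)))]
  simp [hw]

theorem exists_finite_support_finsum_eq_zero_of_periodic {G M : Type*} [CommGroup G]
    [UniqueProds G] [AddCommGroup M] [Finite M] [Nontrivial M] {V : Finset G} (hV : 1 ∉ V) :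
    ∃ β : G → M, (support β).Finite ∧ (support β).Nonempty ∧
      ∀ v ∈ V, ∀ w : G → M →+ M, (∀ g, w (g * v) = w g) → ∑ᶠ g, w g (β g) = 0 := by
  classical
  obtain ⟨p, _, φ, hφ⟩ := exists_prime_zmod_addMonoidHom_injective M
  have hsupp (Q : MonoidAlgebra (ZMod p) G) : support (φ ∘ Q.coeff) = Q.coeff.support := by
    rw [support_comp_eq φ (fun {_} => map_eq_zero_iff φ hφ), Finsupp.fun_support_eq]
  let P : MonoidAlgebra (ZMod p) G := ∏ v ∈ V, (1 - MonoidAlgebra.single v 1)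
  have hP : P ≠ 0 := prod_ne_zero_iff.2 fun v hv h => by
    have := congrArg (fun Q => Q.coeff 1) h
    simp [MonoidAlgebra.coeff_sub, MonoidAlgebra.coeff_single,
      show v ≠ 1 from fun h => hV (h ▸ hv)] at this
  refine ⟨φ ∘ P.coeff, by simp [hsupp], by simpa [hsupp] using hP, fun v hv w hw => ?_⟩
  obtain ⟨Q, hPQ⟩ : ∃ Q, P = Q * (1 - MonoidAlgebra.single v 1) :=
    ⟨_, (prod_erase_mul V _ hv).symm⟩
  have hβ (g : G) : φ (P.coeff g) = φ (Q.coeff g) - φ (Q.coeff (g * v⁻¹)) := by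
    simp [hPQ, mul_sub, MonoidAlgebra.coeff_sub]
  simp only [comp_apply, hβ]
  exact finsum_apply_sub_apply_mul_inv_eq_zero (by simp [← comp_def, hsupp]) w hw

lemma ofAdd_natCast_prod (a b : ℕ) :
    ofAdd ((a : ℤ), (b : ℤ)) = ofAdd ((1, 0) : ℤ × ℤ) ^ a * ofAdd ((0, 1) : ℤ × ℤ) ^ b := by
  rw [← ofAdd_nsmul, ← ofAdd_nsmul, ← ofAdd_add]
  simp

theorem FullShiftTFGAction.exists_finset_forall_exists_c_eq_zero [TopologicalSpace A]
    [CompactSpace A] [Nontrivial A] (T : FullShiftTFGAction A (Multiplicative (ℤ × ℤ))) :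
    ∃ V : Finset (Multiplicative (ℤ × ℤ)), 1 ∉ V ∧ ∀ x, ∃ v ∈ V, T.c v x = 0 := by
  obtain ⟨K₁, hK₁⟩ := T.exists_abs_c_le (ofAdd (1, 0))
  obtain ⟨K₂, hK₂⟩ := T.exists_abs_c_le (ofAdd (0, 1))
  -- chosen so that `2 n (K₁ + K₂) + 1 < (n + 1)²`
  set n := 4 * (K₁ + K₂) + 1 with hn
  let D := (range (n + 1) ×ˢ range (n + 1)).image fun ab : ℕ × ℕ => ofAdd ((ab.1 : ℤ), (ab.2 : ℤ))
  have hD : #D = (n + 1) * (n + 1) := by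
    rw [card_image_of_injective _ fun ab cd h => by simpa [Prod.ext_iff] using h, card_product,
      card_range]
  have hbound : ∀ g ∈ D, ∀ x, |T.c g x| ≤ ↑(n * (K₁ + K₂)) := by
    simp only [D, mem_image, mem_product, mem_range]
    rintro _ ⟨⟨a, b⟩, ⟨ha, hb⟩, rfl⟩ x
    rw [ofAdd_natCast_prod]
    refine (T.abs_c_mul_le (T.abs_c_pow_le hK₁ a) (T.abs_c_pow_le hK₂ b) x).trans ?_
    have : a * K₁ + b * K₂ ≤ n * (K₁ + K₂) := by
      rw [mul_add]
      exact add_le_add (Nat.mul_le_mul_right _ (by omega)) (Nat.mul_le_mul_right _ (by omega))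
    exact_mod_cast this
  refine ⟨(D / D).erase 1, notMem_erase 1 _, fun x => ?_⟩
  obtain ⟨g, hg, hg1, hc⟩ :=
    T.exists_mem_div_ne_one_c_eq_zero D (n * (K₁ + K₂)) (by rw [hD, hn]; nlinarith) hbound x
  exact ⟨g, mem_erase.2 ⟨hg1, hg⟩, hc⟩

end

theorem Z2_not_moveAithful_general {A M : Type*} [Fintype A] [TopologicalSpace A]
    (hcard : 2 ≤ Fintype.card A)
    [AddCommGroup M] [Fintype M] [Nontrivial M]
    (T : FullShiftTFGAction A (Multiplicative (ℤ × ℤ))) :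
    ∃ β : Multiplicative (ℤ × ℤ) → M,
      (Function.support β).Finite ∧ (Function.support β).Nonempty ∧
      ∀ (x : ℤ → A) (γ : ℤ → (M →+ M)), (∑ᶠ g : Multiplicative (ℤ × ℤ), γ (T.c g x) (β g)) = 0 := by
  have : Nontrivial A := Fintype.one_lt_card_iff_nontrivial.1 hcard
  obtain ⟨V, hV1, hV⟩ := T.exists_finset_forall_exists_c_eq_zero
  obtain ⟨β, hfin, hne, hβ⟩ := exists_finite_support_finsum_eq_zero_of_periodic (M := M) hV1
  refine ⟨β, hfin, hne, fun x γ => ?_⟩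
  obtain ⟨v, hv, hcv⟩ := hV x
  refine hβ v hv (fun g => γ (T.c g x)) fun g => ?_
  rw [T.c_mul, T.f_eq_self_of_c_eq_zero hcv, hcv, add_zero]

/-- No embedding of `ℤ²` into the topological full group of a full shift is
move-`M`-ithful for a nontrivial finite abelian group `M`: there is a finitely and
nontrivially supported `β : ℤ² → M` such that for every point `x` and every
`γ : ℤ → End(M)` the sum `Σ_g γ(c_g(x))(β(g))` vanishes. -/
theorem Z2_not_moveAithful {A M : Type*} [Fintype A] [TopologicalSpace A]
    [DiscreteTopology A] (hcard : 2 ≤ Fintype.card A)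
    [AddCommGroup M] [Fintype M] [Nontrivial M]
    (T : FullShiftTFGAction A (Multiplicative (ℤ × ℤ)))
    (hfaith : Function.Injective T.f) :
    ∃ β : Multiplicative (ℤ × ℤ) → M,
      (Function.support β).Finite ∧ (Function.support β).Nonempty ∧
      ∀ (x : ℤ → A) (γ : ℤ → (M →+ M)), (∑ᶠ g : Multiplicative (ℤ × ℤ), γ (T.c g x) (β g)) = 0 :=
  Z2_not_moveAithful_general hcard T
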